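/- Let G be a connected, edge-critical, triangle-free graph and v a vertex of degree 2. Then the graph G_v obtained by deleting v and its two neighbours (and all incident edges) is connected. -/

import Mathlib

open SimpleGraph

/-- The independence number of a graph. -/
noncomputable def indepNumOld {V : Type} (G : SimpleGraph V) : ℕ :=
  sSup {n : ℕ | ∃ s : Set V, s.Finite ∧ s.ncard = n ∧ ∀ a ∈ s, ∀ b ∈ s, ¬ G.Adj a b}

/-- The number of edges of a graph. -/
noncomputable def numEdges {V : Type} (G : SimpleGraph V) : ℕ := G.edgeSet.ncard

/-- The degree (valency) of a vertex. -/
noncomputable def deg {V : Type} (G : SimpleGraph V) (v : V) : ℕ := (G.neighborSet v).ncard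

/-- The second valency `d²(v) = ∑_{w ∈ N(v)} d(w)`. -/
noncomputable def secondDeg {V : Type} (G : SimpleGraph V) (v : V) : ℕ :=
  ∑ᶠ w ∈ G.neighborSet v, deg G w

/-- `p = (a,b,c,d)` is an (ordered) 4-cycle of `G`. -/
def IsC4 {V : Type} (G : SimpleGraph V) (p : V × V × V × V) : Prop :=
  G.Adj p.1 p.2.1 ∧ G.Adj p.2.1 p.2.2.1 ∧ G.Adj p.2.2.1 p.2.2.2 ∧
    G.Adj p.2.2.2 p.1 ∧ p.1 ≠ p.2.2.1 ∧ p.2.1 ≠ p.2.2.2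

/-- The number of 4-cycles of `G`; each 4-cycle yields 8 ordered tuples. -/
noncomputable def numC4 {V : Type} (G : SimpleGraph V) : ℕ :=
  {p : V × V × V × V | IsC4 G p}.ncard / 8

/-- The number of 4-cycles of `G` containing a vertex of `S`. -/
noncomputable def numC4Through {V : Type} (G : SimpleGraph V) (S : Set V) : ℕ :=
  {p : V × V × V × V | IsC4 G p ∧ (p.1 ∈ S ∨ p.2.1 ∈ S ∨ p.2.2.1 ∈ S ∨ p.2.2.2 ∈ S)}.ncard / 8

/-- The invariant `ν(G) = 3e(G) − 17n(G) + 35α(G) + N(C₄;G)`. -/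
noncomputable def nu {V : Type} (G : SimpleGraph V) : ℤ :=
  3 * (numEdges G : ℤ) - 17 * (Nat.card V : ℤ) + 35 * (indepNumOld G : ℤ) + (numC4 G : ℤ)

/-- The closed neighbourhood `N[v]`. -/
def closedNbhd {V : Type} (G : SimpleGraph V) (v : V) : Set V := insert v (G.neighborSet v)

/-- `S` destabilises `G` : removing `S` decreases the independence number. -/
def Destab {V : Type} (G : SimpleGraph V) (S : Set V) : Prop :=
  indepNumOld (G.induce Sᶜ) < indepNumOld G

/-- `G` is edge-critical (α-critical): removing any edge increases the independence number. -/
def EdgeCritical {V : Type} (G : SimpleGraph V) : Prop :=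
  ∀ e ∈ G.edgeSet, indepNumOld G < indepNumOld (G.deleteEdges {e})

/-!
Write `W = V ∖ N[v]`. If an edge `pq` joins `p ∈ N(v)` to `q ∈ W`, a maximum independent set of
`G - pq` has `α + 1` vertices and contains `p` and `q`; it also contains all of `N(v)`, since
otherwise exchanging `p` for `v` would give an independent set of `G` of size `α + 1`. Removing
`N(v)` leaves an independent set `P ⊆ W` of size `α - 1` in which only `q` may see `N(v)`.

If `G[W]` splits into parts `A` and `B` with no edges between them, connectivity of `G` gives such
edges into `A` and into `B`, hence sets `P` and `R`. Then `{v} ∪ (P ∩ A) ∪ (R ∩ B)` and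
`N(v) ∪ (R ∩ A) ∪ (P ∩ B)` are independent (the second because `G` is triangle-free), but their
sizes add up to `|P| + |R| + 3 ≥ 2α + 1`.
-/

namespace SimpleGraph

variable {V : Type} {G : SimpleGraph V}

section IndepNum

variable [Finite V]

lemma bddAbove_indepNumOld_set (G : SimpleGraph V) :
    BddAbove {n : ℕ | ∃ s : Set V, s.Finite ∧ s.ncard = n ∧ ∀ a ∈ s, ∀ b ∈ s, ¬ G.Adj a b} :=
  ⟨Nat.card V, by rintro _ ⟨s, -, rfl, -⟩; exact Set.ncard_le_card s⟩

lemma IsIndepSet.ncard_le_indepNumOld {s : Set V} (hs : G.IsIndepSet s) :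
    s.ncard ≤ indepNumOld G :=
  le_csSup (bddAbove_indepNumOld_set G)
    ⟨s, s.toFinite, rfl, fun _ ha _ hb hab => hs ha hb hab.ne hab⟩

lemma exists_isIndepSet_ncard_eq_indepNumOld (G : SimpleGraph V) :
    ∃ s : Set V, G.IsIndepSet s ∧ s.ncard = indepNumOld G := by
  have hbdd := bddAbove_indepNumOld_set G
  obtain ⟨s, -, hs, hind⟩ := Nat.sSup_mem (by exact ⟨0, ∅, by simp⟩) hbdd
  exact ⟨s, fun a ha b hb _ => hind a ha b hb, hs⟩

end IndepNum

lemma IsIndepSet.subset {s t : Set V} (hs : G.IsIndepSet s) (h : t ⊆ s) : G.IsIndepSet t :=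
  Set.Pairwise.mono h hs

lemma IsIndepSet.union {s t : Set V} (hs : G.IsIndepSet s) (ht : G.IsIndepSet t)
    (hst : ∀ a ∈ s, ∀ b ∈ t, ¬ G.Adj a b) : G.IsIndepSet (s ∪ t) :=
  Set.pairwise_union.2
    ⟨hs, ht, fun a ha b hb _ => ⟨hst a ha b hb, fun h => hst a ha b hb h.symm⟩⟩

lemma IsIndepSet.of_deleteEdges_singleton {e : Sym2 V} {s : Set V}
    (hs : (G.deleteEdges {e}).IsIndepSet s) (he : ∃ x ∈ e, x ∉ s) : G.IsIndepSet s := by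
  rintro a ha b hb hab hadj
  obtain ⟨x, hxe, hxs⟩ := he
  refine hs ha hb hab ((deleteEdges_adj ..).2 ⟨hadj, fun h => ?_⟩)
  rw [Set.mem_singleton_iff] at h
  subst h
  rcases Sym2.mem_iff.1 hxe with rfl | rfl <;> contradiction

lemma EdgeCritical.exists_isIndepSet_deleteEdges [Finite V] (hec : EdgeCritical G) {p q : V}
    (hpq : G.Adj p q) :
    ∃ s : Set V, (G.deleteEdges {s(p, q)}).IsIndepSet s ∧ p ∈ s ∧ q ∈ s ∧
      indepNumOld G < s.ncard := by
  obtain ⟨s, hs, hcard⟩ := exists_isIndepSet_ncard_eq_indepNumOld (G.deleteEdges {s(p, q)})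
  have hlt : indepNumOld G < s.ncard := hcard ▸ hec s(p, q) hpq
  have hpqs : p ∈ s ∧ q ∈ s := by
    by_contra h
    have hG : G.IsIndepSet s := hs.of_deleteEdges_singleton (by grind)
    exact hlt.not_ge hG.ncard_le_indepNumOld
  exact ⟨s, hs, hpqs.1, hpqs.2, hlt⟩

lemma neighborSet_eq_pair_of_deg_eq_two {v p u : V} (hv : deg G v = 2) (hp : G.Adj v p)
    (hu : G.Adj v u) (hpu : p ≠ u) : G.neighborSet v = {p, u} :=
  (Set.eq_of_subset_of_ncard_le (Set.pair_subset hp hu) (by rw [Set.ncard_pair hpu]; exact hv.le)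
    (Set.finite_of_ncard_ne_zero (by change deg G v ≠ 0; omega))).symm

lemma EdgeCritical.exists_isIndepSet_compl_closedNbhd [Finite V] (hec : EdgeCritical G)
    {v p q : V} (hv : deg G v = 2) (hvp : G.Adj v p) (hpq : G.Adj p q)
    (hq : q ∉ closedNbhd G v) :
    ∃ P ⊆ (closedNbhd G v)ᶜ, G.IsIndepSet P ∧ indepNumOld G ≤ P.ncard + 1 ∧
      ∀ w ∈ P, w ≠ q → ∀ u ∈ G.neighborSet v, ¬ G.Adj u w := by
  obtain ⟨S, hS, hpS, -, hlt⟩ := hec.exists_isIndepSet_deleteEdges hpq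
  have hqv : q ≠ v := by rintro rfl; exact hq (Set.mem_insert q _)
  have hvq : ¬ G.Adj v q := fun h => hq (Set.mem_insert_of_mem v h)
  have hvS : v ∉ S := fun hvS =>
    hS hvS hpS hvp.ne ((deleteEdges_adj ..).2 ⟨hvp, by simp [hvp.ne, hqv.symm]⟩)
  have hSp : G.IsIndepSet (S \ {p}) :=
    (hS.subset Set.sdiff_subset).of_deleteEdges_singleton
      ⟨p, Sym2.mem_mk_left p q, fun h => h.2 rfl⟩
  -- Otherwise exchanging `p` for `v` in `S` gives an independent set of `G` larger than `α(G)`.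
  have hNS : G.neighborSet v ⊆ S := by
    intro u hu
    by_contra huS
    have hN := neighborSet_eq_pair_of_deg_eq_two hv hvp hu (fun h => huS (h ▸ hpS))
    have hvS' : ∀ w ∈ S \ {p}, ¬ G.Adj v w := by
      intro w hw hvw
      rw [← mem_neighborSet, hN] at hvw
      rcases hvw with rfl | rfl
      exacts [hw.2 rfl, huS hw.1]
    have hT : G.IsIndepSet (insert v (S \ {p})) :=
      hSp.insert fun w hw _ => ⟨hvS' w hw, fun h => hvS' w hw h.symm⟩
    have := hT.ncard_le_indepNumOld
    rw [Set.ncard_insert_of_notMem (fun h => hvS h.1), Set.ncard_sdiff_singleton_of_mem hpS]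
      at this
    omega
  refine ⟨S \ G.neighborSet v, ?_, ?_, ?_, ?_⟩
  · rintro w ⟨hwS, hwN⟩ (rfl | hw)
    exacts [hvS hwS, hwN hw]
  · exact (hS.subset Set.sdiff_subset).of_deleteEdges_singleton
      ⟨p, Sym2.mem_mk_left p q, fun h => h.2 hvp⟩
  · rw [Set.ncard_sdiff hNS]
    unfold deg at hv
    omega
  · rintro w ⟨hwS, hwN⟩ hwq u hu hadj
    refine hS (hNS hu) hwS (fun h => hwN (h ▸ hu)) ((deleteEdges_adj ..).2 ⟨hadj, ?_⟩)
    rw [Set.mem_singleton_iff, Sym2.eq_iff]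
    rintro (⟨-, rfl⟩ | ⟨rfl, -⟩)
    exacts [hwq rfl, hvq hu]

lemma EdgeCritical.nonempty_compl_closedNbhd [Finite V] (hec : EdgeCritical G)
    (h3 : G.CliqueFree 3) {v : V} (hv : deg G v = 2) : (closedNbhd G v)ᶜ.Nonempty := by
  obtain ⟨x, y, hxy, hN⟩ := Set.ncard_eq_two.mp hv
  have hvx : G.Adj v x := by simp [← mem_neighborSet, hN]
  have hvy : G.Adj v y := by simp [← mem_neighborSet, hN]
  have hα : 2 ≤ indepNumOld G := by
    have := (G.isIndepSet_neighborSet_of_triangleFree h3 v).ncard_le_indepNumOld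
    rwa [hN, Set.ncard_pair hxy] at this
  rw [Set.nonempty_compl]
  intro huniv
  obtain ⟨S, hS, hvS, -, hlt⟩ := hec.exists_isIndepSet_deleteEdges hvx
  have hyS : y ∉ S := fun hyS =>
    hS hvS hyS hvy.ne ((deleteEdges_adj ..).2 ⟨hvy, by simp [hvx.ne, hxy.symm]⟩)
  have hSvx : S ⊆ {v, x} := by
    intro w hw
    have : w ∈ closedNbhd G v := huniv ▸ Set.mem_univ w
    rw [closedNbhd, hN] at this
    rcases this with rfl | rfl | rfl
    exacts [Set.mem_insert _ _, Set.mem_insert_of_mem _ rfl, (hyS hw).elim]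
  have := (Set.ncard_le_ncard hSvx).trans (Set.ncard_pair hvx.ne).le
  omega

/-- For `C ⊆ W`: `C` is a union of connected components of `G[W]`. -/
def AdjClosedIn (G : SimpleGraph V) (W C : Set V) : Prop :=
  ∀ c ∈ C, ∀ w ∈ W, G.Adj c w → w ∈ C

lemma AdjClosedIn.sdiff {W C : Set V} (hC : AdjClosedIn G W C) : AdjClosedIn G W (W \ C) :=
  fun c hc w hw hcw => ⟨hw, fun hwC => hc.2 (hC w hwC c hc.1 hcw.symm)⟩

lemma exists_adjClosedIn_of_not_preconnected_induce {W : Set V}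
    (h : ¬ (G.induce W).Preconnected) :
    ∃ A ⊆ W, A.Nonempty ∧ (W \ A).Nonempty ∧ AdjClosedIn G W A := by
  obtain ⟨a, b, hab⟩ : ∃ a b : W, ¬ (G.induce W).Reachable a b := by
    simpa [Preconnected] using h
  refine ⟨Subtype.val '' {w | (G.induce W).Reachable a w}, by simp,
    ⟨a, a, Reachable.rfl, rfl⟩, ⟨b, b.2, ?_⟩, ?_⟩
  · rintro ⟨w, hw, hwb⟩
    exact hab (Subtype.ext hwb ▸ hw)
  · rintro _ ⟨w, hw, rfl⟩ c hc hwc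
    exact ⟨⟨c, hc⟩, hw.trans (Adj.reachable (by exact hwc)), rfl⟩

lemma exists_adj_of_adjClosedIn_compl_closedNbhd (hconn : G.Preconnected) {v : V} {C : Set V}
    (hCW : C ⊆ (closedNbhd G v)ᶜ) (hC : C.Nonempty)
    (hclosed : AdjClosedIn G (closedNbhd G v)ᶜ C) :
    ∃ u ∈ G.neighborSet v, ∃ c ∈ C, G.Adj u c := by
  obtain ⟨c, hc⟩ := hC
  obtain ⟨d, -, hdC, hdC'⟩ :=
    (hconn c v).some.exists_boundary_dart C hc fun hv => hCW hv (Set.mem_insert v _)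
  by_cases hdW : d.snd ∈ (closedNbhd G v)ᶜ
  · exact absurd (hclosed _ hdC _ hdW d.adj) hdC'
  rw [Set.notMem_compl_iff, closedNbhd, Set.mem_insert_iff] at hdW
  rcases hdW with hdv | hdN
  · exact absurd (Set.mem_insert_of_mem v (hdv ▸ d.adj).symm) (hCW hdC)
  · exact ⟨d.snd, hdN, d.fst, hdC, d.adj.symm⟩

lemma EdgeCritical.exists_isIndepSet_of_adjClosedIn [Finite V] (hec : EdgeCritical G)
    (hconn : G.Preconnected) {v : V} (hv : deg G v = 2) {C : Set V}
    (hCW : C ⊆ (closedNbhd G v)ᶜ) (hC : C.Nonempty)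
    (hclosed : AdjClosedIn G (closedNbhd G v)ᶜ C) :
    ∃ P ⊆ (closedNbhd G v)ᶜ, G.IsIndepSet P ∧ indepNumOld G ≤ P.ncard + 1 ∧
      ∀ w ∈ P, w ∉ C → ∀ u ∈ G.neighborSet v, ¬ G.Adj u w := by
  obtain ⟨p, hvp, q, hqC, hpq⟩ :=
    exists_adj_of_adjClosedIn_compl_closedNbhd hconn hCW hC hclosed
  obtain ⟨P, hPW, hP, hcard, hPq⟩ :=
    hec.exists_isIndepSet_compl_closedNbhd hv hvp hpq (hCW hqC)
  exact ⟨P, hPW, hP, hcard, fun w hw hwC => hPq w hw fun h => hwC (h ▸ hqC)⟩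

lemma ncard_add_ncard_add_three_le_two_mul_indepNumOld [Finite V] (h3 : G.CliqueFree 3)
    {v : V} (hv : deg G v = 2) {A P R : Set V} (hA : AdjClosedIn G (closedNbhd G v)ᶜ A)
    (hPW : P ⊆ (closedNbhd G v)ᶜ) (hP : G.IsIndepSet P)
    (hPA : ∀ w ∈ P, w ∉ A → ∀ u ∈ G.neighborSet v, ¬ G.Adj u w)
    (hRW : R ⊆ (closedNbhd G v)ᶜ) (hR : G.IsIndepSet R)
    (hRA : ∀ w ∈ R, w ∈ A → ∀ u ∈ G.neighborSet v, ¬ G.Adj u w) :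
    P.ncard + R.ncard + 3 ≤ 2 * indepNumOld G := by
  set W := (closedNbhd G v)ᶜ
  have hcross {X Y : Set V} (hY : Y ⊆ W) : ∀ a ∈ X ∩ A, ∀ b ∈ Y \ A, ¬ G.Adj a b :=
    fun a ha b hb hab => hb.2 (hA a ha.2 b (hY hb.1) hab)
  have hdisj {X Y : Set V} : Disjoint (X ∩ A) (Y \ A) :=
    Set.disjoint_left.2 fun _ h₁ h₂ => h₂.2 h₁.2
  have hPRW : P ∩ A ∪ R \ A ⊆ W :=
    Set.union_subset (Set.inter_subset_left.trans hPW) (Set.sdiff_subset.trans hRW)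
  have hRPW : R ∩ A ∪ P \ A ⊆ W :=
    Set.union_subset (Set.inter_subset_left.trans hRW) (Set.sdiff_subset.trans hPW)
  have hvW : ∀ w ∈ W, ¬ G.Adj v w := fun w hw h => hw (Set.mem_insert_of_mem v h)
  have hNW : Disjoint (G.neighborSet v) W :=
    Set.disjoint_compl_right_iff_subset.2 (Set.subset_insert v _)
  have hM : G.IsIndepSet (insert v (P ∩ A ∪ R \ A)) :=
    ((hP.subset Set.inter_subset_left).union (hR.subset Set.sdiff_subset) (hcross hRW)).insert
      fun w hw _ => ⟨hvW w (hPRW hw), fun h => hvW w (hPRW hw) h.symm⟩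
  have hM' : G.IsIndepSet (G.neighborSet v ∪ (R ∩ A ∪ P \ A)) :=
    (G.isIndepSet_neighborSet_of_triangleFree h3 v).union
      ((hR.subset Set.inter_subset_left).union (hP.subset Set.sdiff_subset) (hcross hPW))
      fun u hu w hw =>
        hw.elim (fun hw => hRA w hw.1 hw.2 u hu) (fun hw => hPA w hw.1 hw.2 u hu)
  have hcM := hM.ncard_le_indepNumOld
  have hcM' := hM'.ncard_le_indepNumOld
  rw [Set.ncard_insert_of_notMem fun h => hPRW h (Set.mem_insert v _),
    Set.ncard_union_eq hdisj] at hcM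
  rw [Set.ncard_union_eq (hNW.mono_right hRPW), Set.ncard_union_eq hdisj] at hcM'
  have := Set.ncard_inter_add_ncard_sdiff_eq_ncard P A
  have := Set.ncard_inter_add_ncard_sdiff_eq_ncard R A
  unfold deg at hv
  omega

end SimpleGraph

/-- If `G` is connected, edge-critical and triangle-free and `v` is bivalent,
then `G_v` is connected. -/
theorem stmt4 {V : Type} [Fintype V] (G : SimpleGraph V) (hconn : G.Connected)
    (hec : EdgeCritical G) (h3 : G.CliqueFree 3) (v : V) (hd : deg G v = 2) :
    (G.induce (closedNbhd G v)ᶜ).Connected := by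
  rw [connected_iff]
  refine ⟨?_, (hec.nonempty_compl_closedNbhd h3 hd).to_subtype⟩
  by_contra hdisc
  obtain ⟨A, hAW, hA, hB, hAclosed⟩ := exists_adjClosedIn_of_not_preconnected_induce hdisc
  obtain ⟨P, hPW, hP, hPcard, hPA⟩ :=
    hec.exists_isIndepSet_of_adjClosedIn hconn.preconnected hd hAW hA hAclosed
  obtain ⟨R, hRW, hR, hRcard, hRA⟩ :=
    hec.exists_isIndepSet_of_adjClosedIn hconn.preconnected hd Set.sdiff_subset hB
      hAclosed.sdiff
  have := ncard_add_ncard_add_three_le_two_mul_indepNumOld h3 hd hAclosed hPW hP hPA hRW hR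
    fun w hwR hwA => hRA w hwR fun h => h.2 hwA
  omega
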